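/- arXiv:1311.6279 — 2 statements merged into one kernel-verified Lean document; each statement's English description precedes it below -/
import Mathlib

section
/- Let V = ℝ^{2N} (N ≥ 1) with its Euclidean inner product, J an orthogonal complex structure on V, and R any algebraic curvature tensor on V. Then ∫_{S^{2N−1}} H(v) dσ(v) = ((3s* + s) / (4N(N+1))) · Vol(S^{2N−1}), where H(v) = R(v, J(v), v, J(v)), s is the scalar curvature of R, and s* is the star-scalar curvature of R with respect to J. -/
open MeasureTheory RealInnerProductSpace

noncomputable section

/-- An algebraic curvature tensor on a real inner product space: a 4-linear map
with the usual antisymmetries, pair symmetry and first Bianchi identity. -/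
structure AlgCurvatureTensor (E : Type*) [NormedAddCommGroup E] [InnerProductSpace ℝ E] where
  R : E → E → E → E → ℝ
  add_fst : ∀ x x' y z w, R (x + x') y z w = R x y z w + R x' y z w
  smul_fst : ∀ (c : ℝ) x y z w, R (c • x) y z w = c * R x y z w
  add_snd : ∀ x y y' z w, R x (y + y') z w = R x y z w + R x y' z w
  smul_snd : ∀ (c : ℝ) x y z w, R x (c • y) z w = c * R x y z w
  add_trd : ∀ x y z z' w, R x y (z + z') w = R x y z w + R x y z' w
  smul_trd : ∀ (c : ℝ) x y z w, R x y (c • z) w = c * R x y z w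
  add_fth : ∀ x y z w w', R x y z (w + w') = R x y z w + R x y z w'
  smul_fth : ∀ (c : ℝ) x y z w, R x y z (c • w) = c * R x y z w
  antisymm₁₂ : ∀ x y z w, R x y z w = - R y x z w
  antisymm₃₄ : ∀ x y z w, R x y z w = - R x y w z
  pair_symm : ∀ x y z w, R x y z w = R z w x y
  bianchi : ∀ x y z w, R x y z w + R y z x w + R z x y w = 0

/-- An orthogonal complex structure on a real inner product space:
`J ∘ J = -id` and `J` preserves the inner product. -/
def IsOrthCplxStructure {E : Type*} [NormedAddCommGroup E] [InnerProductSpace ℝ E]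
    (J : E →ₗ[ℝ] E) : Prop :=
  (∀ x, J (J x) = -x) ∧ ∀ x y, (inner ℝ (J x) (J y) : ℝ) = inner ℝ x y

/-- Kähler symmetry of a curvature tensor with respect to a complex structure `J`:
`R(Jx, Jy, z, w) = R(x, y, z, w)`. -/
def AlgCurvatureTensor.IsKaehler {E : Type*} [NormedAddCommGroup E] [InnerProductSpace ℝ E]
    (T : AlgCurvatureTensor E) (J : E →ₗ[ℝ] E) : Prop :=
  ∀ x y z w, T.R (J x) (J y) z w = T.R x y z w

/-- The `i`-th standard basis vector of Euclidean space `ℝⁿ`. -/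
def stdBasis (n : ℕ) (i : Fin n) : EuclideanSpace ℝ (Fin n) := EuclideanSpace.single i 1

/-- The scalar curvature of an algebraic curvature tensor on `ℝⁿ`:
`s = ∑ i ∑ a R(eᵢ, eₐ, eᵢ, eₐ)`. -/
def scalarCurv {n : ℕ} (T : AlgCurvatureTensor (EuclideanSpace ℝ (Fin n))) : ℝ :=
  ∑ i : Fin n, ∑ a : Fin n, T.R (stdBasis n i) (stdBasis n a) (stdBasis n i) (stdBasis n a)

/-- The star-scalar curvature of an algebraic curvature tensor on `ℝⁿ` with respect to `J`:
`s* = ∑ i ∑ a R(eₐ, J eᵢ, eᵢ, J eₐ)`. -/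
def starScalarCurv {n : ℕ} (T : AlgCurvatureTensor (EuclideanSpace ℝ (Fin n)))
    (J : EuclideanSpace ℝ (Fin n) →ₗ[ℝ] EuclideanSpace ℝ (Fin n)) : ℝ :=
  ∑ i : Fin n, ∑ a : Fin n,
    T.R (stdBasis n a) (J (stdBasis n i)) (stdBasis n i) (J (stdBasis n a))

/-- `R` is Einstein with constant `Λ` if `Ric(x,y) = Λ ⟨x,y⟩`. -/
def AlgCurvatureTensor.IsEinstein {n : ℕ}
    (T : AlgCurvatureTensor (EuclideanSpace ℝ (Fin n))) (Λ : ℝ) : Prop :=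
  ∀ x y, (∑ a : Fin n, T.R x (stdBasis n a) y (stdBasis n a)) = Λ * (inner ℝ x y : ℝ)

/-- The canonical surface measure on the unit sphere of Euclidean space,
obtained from the Lebesgue measure. -/
def sphereMeasure (n : ℕ) : Measure (Metric.sphere (0 : EuclideanSpace ℝ (Fin n)) 1) :=
  (volume : Measure (EuclideanSpace ℝ (Fin n))).toSphere

/-- The Euclidean Laplacian `Δf = ∑ i ∂²f/∂xᵢ²`. -/
def eucLaplacian {n : ℕ} (f : EuclideanSpace ℝ (Fin n) → ℝ) (x : EuclideanSpace ℝ (Fin n)) : ℝ :=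
  ∑ i : Fin n, fderiv ℝ (fun y => fderiv ℝ f y (stdBasis n i)) x (stdBasis n i)

/-!
Integrate `exp (-‖x‖²) · H(x)` over `ℝ²ᴺ` in two ways. In polar coordinates, `H` being
homogeneous of degree 4, the integral is `(∫ H dσ) · ∫₀^∞ r ^ (2N + 3) e^(-r²) dr`. In Cartesian
coordinates `H` is a quartic form whose Gaussian integral is given by Wick's formula:
`G ^ 2N / 4` times the sum of its three full contractions, where `G = ∫ e^(-t²) dt`. For the
coefficients `R(eᵢ, J eⱼ, eₖ, J eₗ)` these contractions are `2s*`, `s` and `s*`, by the first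
Bianchi identity and the skew-adjointness of `J`. The same two computations for the constant `1`
give `Vol(S) · ∫₀^∞ r ^ (2N - 1) e^(-r²) dr = G ^ 2N`, and the two radial integrals differ by the
factor `N(N + 1)`.
-/

open Finset Real

namespace AlgCurvatureTensor

variable {E : Type*} [NormedAddCommGroup E] [InnerProductSpace ℝ E] (T : AlgCurvatureTensor E)

def toLinearMap₄ : E →ₗ[ℝ] E →ₗ[ℝ] E →ₗ[ℝ] E →ₗ[ℝ] ℝ :=
  LinearMap.mk₂ ℝ
    (fun x y => LinearMap.mk₂ ℝ (T.R x y) (T.add_trd x y) (fun c => T.smul_trd c x y)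
      (T.add_fth x y) (fun c => T.smul_fth c x y))
    (fun x x' y => by ext z w; exact T.add_fst x x' y z w)
    (fun c x y => by ext z w; exact T.smul_fst c x y z w)
    (fun x y y' => by ext z w; exact T.add_snd x y y' z w)
    (fun c x y => by ext z w; exact T.smul_snd c x y z w)

@[simp]
lemma toLinearMap₄_apply (x y z w : E) : T.toLinearMap₄ x y z w = T.R x y z w := rfl

def holSect (J : E →ₗ[ℝ] E) (x : E) : ℝ := T.R x (J x) x (J x)

lemma holSect_smul (J : E →ₗ[ℝ] E) (r : ℝ) (x : E) :
    T.holSect J (r • x) = r ^ 4 * T.holSect J x := by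
  simp only [holSect, map_smul, T.smul_fst, T.smul_snd, T.smul_trd, T.smul_fth]
  ring

end AlgCurvatureTensor

lemma IsOrthCplxStructure.inner_map_left_eq_neg {E : Type*} [NormedAddCommGroup E]
    [InnerProductSpace ℝ E] {J : E →ₗ[ℝ] E} (hJ : IsOrthCplxStructure J) (x y : E) :
    ⟪J x, y⟫ = -⟪x, J y⟫ := by
  rw [← hJ.2 x (J y), hJ.1, inner_neg_right, neg_neg]

section Trace

variable {ι E : Type*} [Fintype ι] [NormedAddCommGroup E] [InnerProductSpace ℝ E]
  (b : OrthonormalBasis ι ℝ E) {J : E →ₗ[ℝ] E}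

lemma OrthonormalBasis.sum_bilin_map_self_eq_neg (hJ : ∀ x y, ⟪J x, y⟫ = -⟪x, J y⟫)
    (B : E →ₗ[ℝ] E →ₗ[ℝ] ℝ) :
    ∑ a, B (J (b a)) (b a) = -∑ a, B (b a) (J (b a)) := by
  have expand_left : ∀ a, B (J (b a)) (b a) = ∑ c, ⟪b c, J (b a)⟫ * B (b c) (b a) := by
    intro a
    conv_lhs => rw [← b.sum_repr' (J (b a))]
    simp [map_sum, map_smul]
  have expand_right : ∀ c, B (b c) (J (b c)) = ∑ a, ⟪b a, J (b c)⟫ * B (b c) (b a) := by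
    intro c
    conv_lhs => rw [← b.sum_repr' (J (b c))]
    simp [map_sum, map_smul]
  simp only [expand_left, expand_right]
  rw [sum_comm, ← sum_neg_distrib]
  refine sum_congr rfl fun c _ => ?_
  rw [← sum_neg_distrib]
  refine sum_congr rfl fun a _ => ?_
  rw [real_inner_comm, hJ]
  ring

lemma OrthonormalBasis.sum_bilin_map_map (hJ : IsOrthCplxStructure J)
    (B : E →ₗ[ℝ] E →ₗ[ℝ] ℝ) :
    ∑ a, B (J (b a)) (J (b a)) = ∑ a, B (b a) (b a) := by
  simpa [hJ.1] using b.sum_bilin_map_self_eq_neg hJ.inner_map_left_eq_neg (B.compl₂ J)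

end Trace

namespace AlgCurvatureTensor

variable {n : ℕ} (T : AlgCurvatureTensor (EuclideanSpace ℝ (Fin n)))
  {J : EuclideanSpace ℝ (Fin n) →ₗ[ℝ] EuclideanSpace ℝ (Fin n)}

local notation "e" => stdBasis n

lemma sum_R_map_snd (hJ : IsOrthCplxStructure J) (x z : EuclideanSpace ℝ (Fin n)) :
    ∑ a, T.R x (J (e a)) z (e a) = -∑ a, T.R x (e a) z (J (e a)) := by
  simpa [stdBasis] using (EuclideanSpace.basisFun (Fin n) ℝ).sum_bilin_map_self_eq_neg
    hJ.inner_map_left_eq_neg ((T.toLinearMap₄ x).flip z)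

lemma sum_R_map_snd_map_fth (hJ : IsOrthCplxStructure J) (x z : EuclideanSpace ℝ (Fin n)) :
    ∑ a, T.R x (J (e a)) z (J (e a)) = ∑ a, T.R x (e a) z (e a) := by
  simpa [stdBasis] using (EuclideanSpace.basisFun (Fin n) ℝ).sum_bilin_map_map hJ
    ((T.toLinearMap₄ x).flip z)

lemma sum_R_ijij_eq_scalarCurv (hJ : IsOrthCplxStructure J) :
    ∑ i, ∑ j, T.R (e i) (J (e j)) (e i) (J (e j)) = scalarCurv T := by
  simp only [T.sum_R_map_snd_map_fth hJ, scalarCurv]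

lemma sum_R_ijji_eq_starScalarCurv :
    ∑ i, ∑ j, T.R (e i) (J (e j)) (e j) (J (e i)) = starScalarCurv T J :=
  sum_comm

lemma sum_R_iijj_eq_two_mul_starScalarCurv (hJ : IsOrthCplxStructure J) :
    ∑ i, ∑ j, T.R (e i) (J (e i)) (e j) (J (e j)) = 2 * starScalarCurv T J := by
  have bianchi : ∑ i, ∑ j, (T.R (e i) (J (e i)) (e j) (J (e j))
      + T.R (J (e i)) (e j) (e i) (J (e j)) + T.R (e j) (e i) (J (e i)) (J (e j))) = 0 := by
    simp [T.bianchi]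
  have second : ∑ i, ∑ j, T.R (J (e i)) (e j) (e i) (J (e j)) = -starScalarCurv T J := by
    simp only [starScalarCurv, ← sum_neg_distrib]
    exact sum_congr rfl fun i _ => sum_congr rfl fun j _ => T.antisymm₁₂ _ _ _ _
  have third : ∑ i, ∑ j, T.R (e j) (e i) (J (e i)) (J (e j)) = -starScalarCurv T J := by
    calc ∑ i, ∑ j, T.R (e j) (e i) (J (e i)) (J (e j))
        = ∑ j, -∑ i, T.R (e j) (e i) (J (e j)) (J (e i)) := by
          rw [sum_comm]
          simp only [← sum_neg_distrib, ← T.antisymm₃₄]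
      _ = ∑ j, ∑ i, -T.R (e j) (J (e i)) (e i) (J (e j)) := by
          simp only [← T.sum_R_map_snd hJ, ← T.antisymm₃₄]
      _ = -starScalarCurv T J := by
          simp only [starScalarCurv, sum_neg_distrib]
          rw [sum_comm]
  simp only [sum_add_distrib, second, third] at bianchi
  linarith

lemma holSect_eq_sum (x : EuclideanSpace ℝ (Fin n)) :
    T.holSect J x =
      ∑ i, ∑ j, ∑ k, ∑ l,
        T.R (e i) (J (e j)) (e k) (J (e l)) * (x i * x j * x k * x l) := by
  have hx : x = ∑ i, x i • e i := by
    simpa [stdBasis] using ((EuclideanSpace.basisFun (Fin n) ℝ).sum_repr x).symm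
  rw [holSect]
  conv_lhs => rw [hx]
  simp only [map_sum J, map_smul J, ← T.toLinearMap₄_apply]
  -- expanding one slot at a time keeps the summation order `i, j, k, l`
  simp only [map_sum T.toLinearMap₄, map_smul T.toLinearMap₄, LinearMap.sum_apply,
    LinearMap.smul_apply]
  simp only [map_sum (T.toLinearMap₄ _), map_smul (T.toLinearMap₄ _), LinearMap.sum_apply,
    LinearMap.smul_apply]
  simp only [map_sum (T.toLinearMap₄ _ _), map_smul (T.toLinearMap₄ _ _), LinearMap.sum_apply,
    LinearMap.smul_apply]
  simp only [map_sum (T.toLinearMap₄ _ _ _), map_smul (T.toLinearMap₄ _ _ _), smul_eq_mul,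
    mul_sum]
  exact sum_congr rfl fun i _ => sum_congr rfl fun j _ => sum_congr rfl fun k _ =>
    sum_congr rfl fun l _ => by ring

end AlgCurvatureTensor

section GaussianMoments

open Set

def gaussMoment (k : ℕ) : ℝ := ∫ t : ℝ, t ^ k * exp (-t ^ 2)

def halfGaussMoment (k : ℕ) : ℝ := ∫ t in Ioi 0, t ^ k * exp (-t ^ 2)

lemma integrable_pow_mul_exp_neg_sq (k : ℕ) :
    Integrable fun t : ℝ => t ^ k * exp (-t ^ 2) := by
  simpa using integrable_rpow_mul_exp_neg_mul_sq one_pos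
    (show (-1 : ℝ) < k by linarith [k.cast_nonneg (α := ℝ)])

lemma halfGaussMoment_eq_Gamma (k : ℕ) : halfGaussMoment k = Gamma ((k + 1) / 2) / 2 := by
  have h := integral_rpow_mul_exp_neg_rpow two_pos
    (show (-1 : ℝ) < k by linarith [k.cast_nonneg (α := ℝ)])
  simp only [rpow_natCast, rpow_two] at h
  rw [halfGaussMoment, h]
  ring

lemma halfGaussMoment_pos (k : ℕ) : 0 < halfGaussMoment k := by
  rw [halfGaussMoment_eq_Gamma]
  have := Gamma_pos_of_pos (show (0 : ℝ) < (k + 1) / 2 by positivity)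
  positivity

lemma halfGaussMoment_add_two (k : ℕ) :
    halfGaussMoment (k + 2) = (k + 1) / 2 * halfGaussMoment k := by
  rw [halfGaussMoment_eq_Gamma, halfGaussMoment_eq_Gamma, Nat.cast_add, Nat.cast_ofNat,
    show ((k : ℝ) + 2 + 1) / 2 = (k + 1) / 2 + 1 by ring, Gamma_add_one (by positivity)]
  ring

lemma gaussMoment_eq (k : ℕ) : gaussMoment k = ((-1) ^ k + 1) * halfGaussMoment k := by
  have hint := integrable_pow_mul_exp_neg_sq k
  have left : ∫ t in Iic 0, t ^ k * exp (-t ^ 2) = (-1) ^ k * halfGaussMoment k := by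
    rw [← neg_zero, ← integral_comp_neg_Ioi, halfGaussMoment, ← integral_const_mul]
    refine setIntegral_congr_fun measurableSet_Ioi fun t _ => ?_
    rw [neg_pow, neg_sq, mul_assoc]
  rw [gaussMoment, ← intervalIntegral.integral_Iic_add_Ioi hint.integrableOn hint.integrableOn,
    left, halfGaussMoment]
  ring

lemma gaussMoment_add_two (k : ℕ) : gaussMoment (k + 2) = (k + 1) / 2 * gaussMoment k := by
  rw [gaussMoment_eq, gaussMoment_eq, halfGaussMoment_add_two]
  ring

lemma gaussMoment_of_odd {k : ℕ} (hk : Odd k) : gaussMoment k = 0 := by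
  rw [gaussMoment_eq, hk.neg_one_pow]
  ring

lemma gaussMoment_zero_pos : 0 < gaussMoment 0 := by
  rw [gaussMoment_eq]
  linarith [halfGaussMoment_pos 0]

lemma gaussMoment_one : gaussMoment 1 = 0 := gaussMoment_of_odd odd_one

lemma gaussMoment_two : gaussMoment 2 = gaussMoment 0 / 2 := by
  rw [gaussMoment_add_two]
  ring

lemma gaussMoment_three : gaussMoment 3 = 0 := gaussMoment_of_odd (by decide)

lemma gaussMoment_four : gaussMoment 4 = 3 / 4 * gaussMoment 0 := by
  rw [gaussMoment_add_two, gaussMoment_two]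
  ring

end GaussianMoments

section Wick

variable {ι : Type*} [Fintype ι]

lemma EuclideanSpace.exp_neg_norm_sq (x : EuclideanSpace ℝ ι) :
    exp (-‖x‖ ^ 2) = ∏ m, exp (-x m ^ 2) := by
  rw [EuclideanSpace.norm_sq_eq, ← exp_sum, ← sum_neg_distrib]
  simp

lemma prod_pow_mul_exp_neg_norm_sq (g : ι → ℕ) (x : EuclideanSpace ℝ ι) :
    (∏ m, x m ^ g m) * exp (-‖x‖ ^ 2) = ∏ m, x m ^ g m * exp (-x m ^ 2) := by
  rw [EuclideanSpace.exp_neg_norm_sq, prod_mul_distrib]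

lemma integrable_prod_pow_mul_gaussian (g : ι → ℕ) :
    Integrable fun x : EuclideanSpace ℝ ι => (∏ m, x m ^ g m) * exp (-‖x‖ ^ 2) := by
  simp only [prod_pow_mul_exp_neg_norm_sq]
  exact ((PiLp.volume_preserving_ofLp ι).integrable_comp_emb
    (MeasurableEquiv.toLp 2 (ι → ℝ)).symm.measurableEmbedding).2
    (Integrable.fintype_prod fun m => integrable_pow_mul_exp_neg_sq (g m))

lemma integral_prod_pow_mul_gaussian (g : ι → ℕ) :
    ∫ x : EuclideanSpace ℝ ι, (∏ m, x m ^ g m) * exp (-‖x‖ ^ 2) =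
      ∏ m, gaussMoment (g m) := by
  simp only [prod_pow_mul_exp_neg_norm_sq]
  exact ((EuclideanSpace.volume_preserving_symm_measurableEquiv_toLp ι).integral_comp'
    (fun y : ι → ℝ => ∏ m, y m ^ g m * exp (-y m ^ 2))).trans
    (integral_fintype_prod_volume_eq_prod (fun m (t : ℝ) => t ^ g m * exp (-t ^ 2)))

variable [DecidableEq ι]

def indexCount (i j k l m : ι) : ℕ :=
  (if i = m then 1 else 0) + (if j = m then 1 else 0) + (if k = m then 1 else 0) +
    (if l = m then 1 else 0)

lemma prod_pow_indexCount {M : Type*} [CommMonoid M] (x : ι → M) (i j k l : ι) :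
    ∏ m, x m ^ indexCount i j k l m = x i * x j * x k * x l := by
  simp only [indexCount, pow_add, prod_mul_distrib, prod_pow_boole, mem_univ, if_true]

lemma prod_gaussMoment_indexCount (i j k l : ι) :
    ∏ m, gaussMoment (indexCount i j k l m) = gaussMoment 0 ^ Fintype.card ι / 4 *
      ((if i = j then 1 else 0) * (if k = l then 1 else 0) +
        (if i = k then 1 else 0) * (if j = l then 1 else 0) +
        (if i = l then 1 else 0) * (if j = k then 1 else 0)) := by
  have hG := gaussMoment_zero_pos.ne'
  have normalize : ∏ m, gaussMoment (indexCount i j k l m) =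
      gaussMoment 0 ^ Fintype.card ι *
        ∏ m, gaussMoment (indexCount i j k l m) / gaussMoment 0 := by
    rw [← card_univ, ← prod_const, ← prod_mul_distrib]
    exact prod_congr rfl fun m _ => by field_simp
  rw [normalize, ← prod_subset (subset_univ {i, j, k, l}) fun m _ hm => by
    simp only [mem_insert, mem_singleton, not_or] at hm
    simp [indexCount, Ne.symm hm.1, Ne.symm hm.2.1, Ne.symm hm.2.2.1, Ne.symm hm.2.2.2, hG]]
  clear normalize
  by_cases i = j <;> by_cases i = k <;> by_cases i = l <;> by_cases j = k <;>
    by_cases j = l <;> by_cases k = l <;>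
    simp_all [indexCount, prod_insert, gaussMoment_one, gaussMoment_two, gaussMoment_three,
      gaussMoment_four, Ne.symm] <;> field_simp <;> norm_num

lemma integrable_mul_mul_mul_mul_gaussian (i j k l : ι) :
    Integrable fun x : EuclideanSpace ℝ ι => x i * x j * x k * x l * exp (-‖x‖ ^ 2) := by
  simp_rw [← prod_pow_indexCount _ i j k l]
  exact integrable_prod_pow_mul_gaussian _

lemma integral_mul_mul_mul_mul_gaussian (i j k l : ι) :
    ∫ x : EuclideanSpace ℝ ι, x i * x j * x k * x l * exp (-‖x‖ ^ 2) =
      gaussMoment 0 ^ Fintype.card ι / 4 *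
        ((if i = j then 1 else 0) * (if k = l then 1 else 0) +
          (if i = k then 1 else 0) * (if j = l then 1 else 0) +
          (if i = l then 1 else 0) * (if j = k then 1 else 0)) := by
  simp_rw [← prod_pow_indexCount _ i j k l]
  rw [integral_prod_pow_mul_gaussian, prod_gaussMoment_indexCount]

lemma integral_gaussian_mul_quartic (c : ι → ι → ι → ι → ℝ) :
    ∫ x : EuclideanSpace ℝ ι,
        exp (-‖x‖ ^ 2) * ∑ i, ∑ j, ∑ k, ∑ l, c i j k l * (x i * x j * x k * x l) =
      gaussMoment 0 ^ Fintype.card ι / 4 * ∑ i, ∑ j, (c i i j j + c i j i j + c i j j i) := by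
  calc ∫ x : EuclideanSpace ℝ ι,
        exp (-‖x‖ ^ 2) * ∑ i, ∑ j, ∑ k, ∑ l, c i j k l * (x i * x j * x k * x l)
      = ∫ x : EuclideanSpace ℝ ι, ∑ p : ι × ι × ι × ι, c p.1 p.2.1 p.2.2.1 p.2.2.2 *
          (x p.1 * x p.2.1 * x p.2.2.1 * x p.2.2.2 * exp (-‖x‖ ^ 2)) := by
        simp only [Fintype.sum_prod_type, mul_sum]
        congr! 6 with x i j k l
        ring
    _ = ∑ p : ι × ι × ι × ι, c p.1 p.2.1 p.2.2.1 p.2.2.2 *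
          ∫ x : EuclideanSpace ℝ ι,
            x p.1 * x p.2.1 * x p.2.2.1 * x p.2.2.2 * exp (-‖x‖ ^ 2) := by
        rw [integral_finsetSum]
        · simp only [integral_const_mul]
        · exact fun p _ => (integrable_mul_mul_mul_mul_gaussian _ _ _ _).const_mul _
    _ = _ := by
        simp only [integral_mul_mul_mul_mul_gaussian, mul_ite, mul_one, mul_zero, mul_add,
          sum_add_distrib, Fintype.sum_prod_type, sum_ite_eq, mem_univ, ↓reduceIte,
          sum_ite_irrel, sum_const_zero]
        simp only [mul_sum, ← sum_add_distrib]
        exact sum_congr rfl fun i _ => sum_congr rfl fun j _ => by ring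

end Wick

section Polar

open Set Module

lemma integral_volumeIoiPow_pow_mul_exp_neg_sq (m k : ℕ) :
    ∫ r : Ioi (0 : ℝ), (r : ℝ) ^ k * exp (-(r : ℝ) ^ 2) ∂Measure.volumeIoiPow m =
      halfGaussMoment (m + k) := by
  simp only [Measure.volumeIoiPow, ENNReal.ofReal]
  rw [integral_withDensity_eq_integral_smul (by fun_prop),
    integral_subtype_comap measurableSet_Ioi
      (fun r : ℝ => (r ^ m).toNNReal • (r ^ k * exp (-r ^ 2)))]
  refine setIntegral_congr_fun measurableSet_Ioi fun r hr => ?_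
  rw [NNReal.smul_def, Real.coe_toNNReal _ (pow_nonneg (le_of_lt hr) _), smul_eq_mul,
    ← mul_assoc, ← pow_add]

variable {E : Type*} [NormedAddCommGroup E] [InnerProductSpace ℝ E] [FiniteDimensional ℝ E]
  [Nontrivial E] [MeasurableSpace E] [BorelSpace E] (μ : Measure E) [μ.IsAddHaarMeasure]

theorem integral_gaussian_mul_of_homogeneous {f : E → ℝ} {k : ℕ}
    (hf : ∀ (r : ℝ) (x : E), 0 < r → f (r • x) = r ^ k * f x) :
    ∫ x, exp (-‖x‖ ^ 2) * f x ∂μ =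
      (∫ v, f v ∂μ.toSphere) * halfGaussMoment (finrank ℝ E - 1 + k) := by
  let polar : Metric.sphere (0 : E) 1 × Ioi (0 : ℝ) → ℝ :=
    fun p => f p.1 * ((p.2 : ℝ) ^ k * exp (-(p.2 : ℝ) ^ 2))
  have polar_apply : ∀ x : ({0}ᶜ : Set E),
      polar (homeomorphUnitSphereProd E x) = exp (-‖(x : E)‖ ^ 2) * f x := by
    intro x
    have hx : 0 < ‖(x : E)‖ := norm_pos_iff.2 x.2
    have := hf ‖(x : E)‖ (‖(x : E)‖⁻¹ • (x : E)) hx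
    rw [smul_inv_smul₀ hx.ne'] at this
    simp only [polar, homeomorphUnitSphereProd_apply_fst_coe,
      homeomorphUnitSphereProd_apply_snd_coe, this]
    ring
  calc ∫ x, exp (-‖x‖ ^ 2) * f x ∂μ
      = ∫ x : ({0}ᶜ : Set E), exp (-‖(x : E)‖ ^ 2) * f x ∂μ.comap Subtype.val := by
        rw [integral_subtype_comap (measurableSet_singleton 0).compl
          (fun x : E => exp (-‖x‖ ^ 2) * f x), restrict_compl_singleton]
    _ = ∫ p, polar p ∂μ.toSphere.prod (Measure.volumeIoiPow (finrank ℝ E - 1)) := by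
        simp only [← polar_apply]
        exact μ.measurePreserving_homeomorphUnitSphereProd.integral_comp
          (Homeomorph.measurableEmbedding _) polar
    _ = _ := by
        rw [integral_prod_mul (fun v : Metric.sphere (0 : E) 1 => f v)
          (fun r : Ioi (0 : ℝ) => (r : ℝ) ^ k * exp (-(r : ℝ) ^ 2)),
          integral_volumeIoiPow_pow_mul_exp_neg_sq]

lemma measureReal_toSphere_univ_mul_halfGaussMoment {ι : Type*} [Fintype ι] [Nonempty ι] :
    (volume : Measure (EuclideanSpace ℝ ι)).toSphere.real univ *
      halfGaussMoment (Fintype.card ι - 1) = gaussMoment 0 ^ Fintype.card ι := by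
  have polar := integral_gaussian_mul_of_homogeneous (volume : Measure (EuclideanSpace ℝ ι))
    (f := fun _ => (1 : ℝ)) (k := 0) (by simp)
  have cartesian := integral_prod_pow_mul_gaussian (ι := ι) (fun _ => 0)
  simp only [pow_zero, prod_const_one, one_mul, mul_one, integral_const, smul_eq_mul,
    finrank_euclideanSpace, add_zero] at polar cartesian
  rw [← polar, cartesian, prod_const, card_univ]

end Polar

lemma AlgCurvatureTensor.integral_gaussian_mul_holSect {n : ℕ}
    (T : AlgCurvatureTensor (EuclideanSpace ℝ (Fin n)))
    {J : EuclideanSpace ℝ (Fin n) →ₗ[ℝ] EuclideanSpace ℝ (Fin n)}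
    (hJ : IsOrthCplxStructure J) :
    ∫ x, exp (-‖x‖ ^ 2) * T.holSect J x =
      gaussMoment 0 ^ n / 4 * (3 * starScalarCurv T J + scalarCurv T) := by
  simp only [T.holSect_eq_sum]
  rw [integral_gaussian_mul_quartic, Fintype.card_fin]
  simp only [sum_add_distrib, T.sum_R_iijj_eq_two_mul_starScalarCurv hJ,
    T.sum_R_ijij_eq_scalarCurv hJ, T.sum_R_ijji_eq_starScalarCurv]
  ring

/-- For any algebraic curvature tensor on `ℝ^{2N}` with an orthogonal
complex structure `J`, `∫_{S^{2N-1}} H dσ = ((3s* + s)/(4N(N+1))) · Vol(S^{2N-1})`. -/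
theorem integral_holSectCurv_almostHermitian (N : ℕ) (hN : 1 ≤ N)
    (J : EuclideanSpace ℝ (Fin (2 * N)) →ₗ[ℝ] EuclideanSpace ℝ (Fin (2 * N)))
    (hJ : IsOrthCplxStructure J)
    (T : AlgCurvatureTensor (EuclideanSpace ℝ (Fin (2 * N)))) :
    (∫ v : Metric.sphere (0 : EuclideanSpace ℝ (Fin (2 * N))) 1,
        T.R ↑v (J ↑v) ↑v (J ↑v) ∂(sphereMeasure (2 * N)))
      = ((3 * starScalarCurv T J + scalarCurv T) / (4 * (N : ℝ) * ((N : ℝ) + 1))) *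
        ((sphereMeasure (2 * N)) Set.univ).toReal := by
  have : NeZero (2 * N) := ⟨by omega⟩
  set S := ∫ v : Metric.sphere (0 : EuclideanSpace ℝ (Fin (2 * N))) 1,
    T.R ↑v (J ↑v) ↑v (J ↑v) ∂(sphereMeasure (2 * N))
  set c := 3 * starScalarCurv T J + scalarCurv T
  have curvature : S * halfGaussMoment (2 * N - 1 + 4) = gaussMoment 0 ^ (2 * N) / 4 * c := by
    rw [← T.integral_gaussian_mul_holSect hJ, integral_gaussian_mul_of_homogeneous volume
      (fun r x _ => T.holSect_smul J r x), finrank_euclideanSpace_fin]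
    rfl
  have sphere : ((sphereMeasure (2 * N)) Set.univ).toReal * halfGaussMoment (2 * N - 1) =
      gaussMoment 0 ^ (2 * N) := by
    have := measureReal_toSphere_univ_mul_halfGaussMoment (ι := Fin (2 * N))
    rwa [Fintype.card_fin] at this
  have radial : halfGaussMoment (2 * N - 1 + 4) = N * (N + 1) * halfGaussMoment (2 * N - 1) := by
    rw [show 2 * N - 1 + 4 = 2 * N - 1 + 2 + 2 by omega, halfGaussMoment_add_two,
      halfGaussMoment_add_two, show 2 * N - 1 + 2 = 2 * N + 1 by omega]
    push_cast [show 1 ≤ 2 * N by omega]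
    ring
  have hN' : (0 : ℝ) < N := by exact_mod_cast hN
  rw [div_mul_eq_mul_div, eq_div_iff (by positivity)]
  refine mul_right_cancel₀ (halfGaussMoment_pos (2 * N - 1)).ne' ?_
  linear_combination 4 * curvature - c * sphere - 4 * S * radial
end
end

section
/- Let V = ℝ^{2N} (N ≥ 1) with its Euclidean inner product, J an orthogonal complex structure on V, and R an algebraic curvature tensor on V with the Kähler symmetry with respect to J. If H(v) ≤ s/(N(N+1)) for every unit vector v ∈ V (or alternatively H(v) ≥ s/(N(N+1)) for every unit vector v), then H(v) = s/(N(N+1)) for every unit vector v ∈ V. -/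
open MeasureTheory RealInnerProductSpace

noncomputable section

/-!
Complete the unit vector `v` to a unitary frame `u₁, …, u_N` (orthonormal with `uᵢ ⊥ J uⱼ`).
In such a frame `s = 2 ∑ᵢⱼ R(uᵢ, Juᵢ, uⱼ, Juⱼ)`, and summing the polarisation identity
`∑ₘ H(z + iᵐ u) = 4 H(z) + 4 H(u) + 16 R(z, Jz, u, Ju)` over the `4ᴺ` vectors `∑ᵢ iᵏ⁽ⁱ⁾ uᵢ`
(each of squared norm `N`) shows that their average of `H` is `s - ∑ᵢ H(uᵢ)`.
If `H ≤ c := s / (N(N+1))` on unit vectors, this average is at most `N² c`, so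
`∑ᵢ H(uᵢ) ≥ s - N² c = N c`; since also `H(uᵢ) ≤ c` for each `i`, all `H(uᵢ)` equal `c`.
The case `H ≥ c` is the case `H ≤ c` for `-R`.
-/

namespace AlgCurvatureTensor

variable {E : Type*} [NormedAddCommGroup E] [InnerProductSpace ℝ E]

instance : Neg (AlgCurvatureTensor E) where
  neg T :=
    { R := fun x y z w => -T.R x y z w
      add_fst := fun x x' y z w => by rw [T.add_fst]; ring
      smul_fst := fun c x y z w => by rw [T.smul_fst]; ring
      add_snd := fun x y y' z w => by rw [T.add_snd]; ring
      smul_snd := fun c x y z w => by rw [T.smul_snd]; ring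
      add_trd := fun x y z z' w => by rw [T.add_trd]; ring
      smul_trd := fun c x y z w => by rw [T.smul_trd]; ring
      add_fth := fun x y z w w' => by rw [T.add_fth]; ring
      smul_fth := fun c x y z w => by rw [T.smul_fth]; ring
      antisymm₁₂ := fun x y z w => by rw [T.antisymm₁₂]
      antisymm₃₄ := fun x y z w => by rw [T.antisymm₃₄]
      pair_symm := fun x y z w => by rw [T.pair_symm]
      bianchi := fun x y z w => by linear_combination -T.bianchi x y z w }

variable (T : AlgCurvatureTensor E)

@[simp]
lemma neg_R (x y z w : E) : (-T).R x y z w = -T.R x y z w := rfl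

lemma neg_fst (x y z w : E) : T.R (-x) y z w = -T.R x y z w := by
  simpa using T.smul_fst (-1) x y z w

lemma neg_snd (x y z w : E) : T.R x (-y) z w = -T.R x y z w := by
  simpa using T.smul_snd (-1) x y z w

lemma neg_trd (x y z w : E) : T.R x y (-z) w = -T.R x y z w := by
  simpa using T.smul_trd (-1) x y z w

lemma neg_fth (x y z w : E) : T.R x y z (-w) = -T.R x y z w := by
  simpa using T.smul_fth (-1) x y z w

lemma zero_fst (y z w : E) : T.R 0 y z w = 0 := by
  simpa using T.smul_fst 0 0 y z w

lemma R_swap_swap (x y : E) : T.R y x y x = T.R x y x y := by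
  rw [T.antisymm₁₂, T.antisymm₃₄ x, neg_neg]

/-- Holomorphic sectional curvature, not normalised by `‖x‖⁴`. -/
def holSec (J : E →ₗ[ℝ] E) (x : E) : ℝ := T.R x (J x) x (J x)

/-- Holomorphic bisectional curvature, not normalised by `‖x‖² ‖y‖²`. -/
def holBisec (J : E →ₗ[ℝ] E) (x y : E) : ℝ := T.R x (J x) y (J y)

variable {T} {J : E →ₗ[ℝ] E}

lemma holSec_neg (x : E) : (-T).holSec J x = -T.holSec J x := rfl

lemma holBisec_comm (x y : E) : T.holBisec J x y = T.holBisec J y x := T.pair_symm _ _ _ _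

lemma holSec_smul (c : ℝ) (x : E) : T.holSec J (c • x) = c ^ 4 * T.holSec J x := by
  simp only [holSec, map_smul, T.smul_fst, T.smul_snd, T.smul_trd, T.smul_fth]
  ring

lemma holSec_le_mul_norm_pow_four {c : ℝ} (hc : ∀ v : E, ‖v‖ = 1 → T.holSec J v ≤ c)
    (x : E) : T.holSec J x ≤ c * ‖x‖ ^ 4 := by
  rcases eq_or_ne x 0 with rfl | hx
  · simpa using (holSec_smul (T := T) (J := J) 0 0).le
  · have hx' : ‖x‖ ≠ 0 := norm_ne_zero_iff.mpr hx
    have hunit : ‖‖x‖⁻¹ • x‖ = 1 := by rw [norm_smul, norm_inv, norm_norm, inv_mul_cancel₀ hx']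
    calc T.holSec J x = T.holSec J (‖x‖ • ‖x‖⁻¹ • x) := by rw [smul_inv_smul₀ hx']
      _ = ‖x‖ ^ 4 * T.holSec J (‖x‖⁻¹ • x) := holSec_smul _ _
      _ ≤ ‖x‖ ^ 4 * c := by gcongr; exact hc _ hunit
      _ = c * ‖x‖ ^ 4 := mul_comm _ _

lemma holSec_add_add_holSec_sub (x w : E) :
    T.holSec J (x + w) + T.holSec J (x - w) =
      2 * T.holSec J x + 2 * T.holSec J w + 4 * T.holBisec J x w +
      2 * T.R w (J x) w (J x) + 2 * T.R x (J w) x (J w) + 4 * T.R x (J w) w (J x) := by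
  simp only [holSec, holBisec, sub_eq_add_neg, map_add, map_neg, T.add_fst, T.add_snd,
    T.add_trd, T.add_fth, neg_fst, neg_snd, neg_trd, neg_fth]
  linarith [T.pair_symm w (J w) x (J x), T.pair_symm w (J x) x (J w)]

section ComplexStructure

variable (hJ : ∀ x, J (J x) = -x)
include hJ

lemma holSec_J (x : E) : T.holSec J (J x) = T.holSec J x := by
  rw [holSec, hJ, neg_snd, neg_fth, neg_neg, R_swap_swap]; rfl

lemma holBisec_J_right (x y : E) : T.holBisec J x (J y) = T.holBisec J x y := by
  rw [holBisec, hJ, neg_fth, T.antisymm₃₄ x (J x) (J y), neg_neg]; rfl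

lemma holBisec_J_left (x y : E) : T.holBisec J (J x) y = T.holBisec J x y := by
  rw [holBisec_comm, holBisec_J_right hJ, holBisec_comm]

end ComplexStructure

namespace IsKaehler

variable (hK : T.IsKaehler J)
include hK

lemma neg : (-T).IsKaehler J := fun x y z w => by
  simp only [neg_R, hK x y z w]

lemma R_J_J_right (x y z w : E) : T.R x y (J z) (J w) = T.R x y z w := by
  rw [T.pair_symm, hK, T.pair_symm]

lemma R_add_R_J_swap (x y : E) :
    T.R x y x y + T.R x (J y) y (J x) = T.holBisec J x y := by
  rw [holBisec]
  linarith [T.bianchi x (J y) y (J x), T.pair_symm (J y) y x (J x),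
    T.antisymm₃₄ x (J x) y (J y), hK.R_J_J_right y x y x, T.R_swap_swap x y]

variable (hJ : ∀ x, J (J x) = -x)
include hJ

lemma R_J_left (x y z w : E) : T.R (J x) y z w = -T.R x (J y) z w := by
  rw [← hK x (J y), hJ, neg_snd, neg_neg]

lemma R_add_R_J (x y : E) :
    T.R x y x y + T.R x (J y) x (J y) = T.holBisec J x y := by
  rw [holBisec]
  linarith [T.bianchi y (J y) (J x) x, T.antisymm₃₄ y (J y) (J x) x, T.pair_symm y (J y) x (J x),
    hK y x y x, T.R_swap_swap x y, hK.R_J_left hJ x y (J y) x, T.antisymm₃₄ x (J y) (J y) x]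

end IsKaehler

end AlgCurvatureTensor

/-- Multiplication by `iᵐ` for the complex structure `J`. -/
def phaseMul {E : Type*} [AddCommGroup E] [Module ℝ E] (J : E →ₗ[ℝ] E) : Fin 4 → E → E
  | 0, x => x
  | 1, x => J x
  | 2, x => -x
  | 3, x => -J x

def phaseSum {E : Type*} [AddCommGroup E] [Module ℝ E] (J : E →ₗ[ℝ] E) {n : ℕ}
    (u : Fin n → E) (k : Fin n → Fin 4) : E :=
  ∑ i, phaseMul J (k i) (u i)

lemma phaseSum_cons {E : Type*} [AddCommGroup E] [Module ℝ E] (J : E →ₗ[ℝ] E) {n : ℕ}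
    (u : Fin (n + 1) → E) (m : Fin 4) (k : Fin n → Fin 4) :
    phaseSum J u (Fin.cons m k) = phaseSum J (Fin.tail u) k + phaseMul J m (u 0) := by
  simp [phaseSum, Fin.sum_univ_succ, Fin.tail, add_comm]

lemma Fin.sum_univ_succ_fun {M α : Type*} [AddCommMonoid M] [Fintype α] {n : ℕ}
    (F : (Fin (n + 1) → α) → M) :
    ∑ k, F k = ∑ k : Fin n → α, ∑ m, F (Fin.cons m k) := by
  rw [← (Fin.consEquiv fun _ => α).sum_comp, Fintype.sum_prod_type_right]
  rfl

namespace AlgCurvatureTensor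

open Finset

variable {E : Type*} [NormedAddCommGroup E] [InnerProductSpace ℝ E]
variable {T : AlgCurvatureTensor E} {J : E →ₗ[ℝ] E}

lemma sum_holBisec_add_phaseMul (hJ : ∀ x, J (J x) = -x) (z u y : E) :
    ∑ m, T.holBisec J (z + phaseMul J m u) y = 4 * T.holBisec J z y + 4 * T.holBisec J u y := by
  have := holBisec_J_left (T := T) hJ u y
  rw [Fin.sum_univ_four]
  simp only [phaseMul, holBisec, map_add, map_neg, T.add_fst, T.add_snd, neg_fst, neg_snd] at *
  linarith

lemma IsKaehler.sum_holSec_add_phaseMul (hK : T.IsKaehler J) (hJ : ∀ x, J (J x) = -x)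
    (z u : E) :
    ∑ m, T.holSec J (z + phaseMul J m u) =
      4 * T.holSec J z + 4 * T.holSec J u + 16 * T.holBisec J z u := by
  -- The last three terms of `holSec_add_add_holSec_sub` are each
  -- `holBisec z u - R(z, u, z, u)` for `w = u` and each `R(z, u, z, u)` for `w = J u`.
  have hu := T.holSec_add_add_holSec_sub (J := J) z u
  have hJu := T.holSec_add_add_holSec_sub (J := J) z (J u)
  rw [holSec_J hJ, holBisec_J_right hJ, hK, hK.R_J_J_right, hJ, neg_snd, neg_fth, neg_snd,
    hK.R_J_J_right] at hJu
  rw [Fin.sum_univ_four]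
  simp only [phaseMul, ← sub_eq_add_neg]
  linarith [hK.R_add_R_J hJ z u, hK.R_add_R_J hJ u z, hK.R_add_R_J_swap z u, T.R_swap_swap z u,
    T.antisymm₃₄ z u z u, holBisec_comm (T := T) (J := J) z u]

lemma sum_holBisec_phaseSum (hJ : ∀ x, J (J x) = -x) {n : ℕ} (u : Fin n → E) (y : E) :
    ∑ k, T.holBisec J (phaseSum J u k) y = 4 ^ n * ∑ i, T.holBisec J (u i) y := by
  induction n with
  | zero => simp [phaseSum, holBisec, zero_fst]
  | succ n ih =>
    simp_rw [Fin.sum_univ_succ_fun, phaseSum_cons, sum_holBisec_add_phaseMul hJ, sum_add_distrib,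
      ← mul_sum, ih, sum_const, card_univ, Fintype.card_fun, Fintype.card_fin, Fin.sum_univ_succ]
    simp only [Fin.tail, nsmul_eq_mul]
    push_cast
    ring

lemma IsKaehler.sum_holSec_phaseSum (hK : T.IsKaehler J) (hJ : ∀ x, J (J x) = -x) {n : ℕ}
    (u : Fin n → E) :
    ∑ k, T.holSec J (phaseSum J u k) =
      4 ^ n * (2 * ∑ i, ∑ j, T.holBisec J (u i) (u j) - ∑ i, T.holSec J (u i)) := by
  induction n with
  | zero => simp [phaseSum, holSec, zero_fst]
  | succ n ih =>
    simp_rw [Fin.sum_univ_succ_fun, phaseSum_cons, hK.sum_holSec_add_phaseMul hJ, sum_add_distrib,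
      ← mul_sum, ih, sum_holBisec_phaseSum hJ, sum_const, card_univ, Fintype.card_fun,
      Fintype.card_fin, Fin.sum_univ_succ, holBisec_comm (u 0)]
    simp only [Fin.tail, nsmul_eq_mul, sum_add_distrib]
    push_cast
    rw [show T.holBisec J (u 0) (u 0) = T.holSec J (u 0) from rfl]
    ring

end AlgCurvatureTensor

namespace IsOrthCplxStructure

variable {E : Type*} [NormedAddCommGroup E] [InnerProductSpace ℝ E] {J : E →ₗ[ℝ] E}
variable (hJ : IsOrthCplxStructure J)
include hJ

lemma inner_J_left (x y : E) : ⟪J x, y⟫ = -⟪x, J y⟫ := by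
  rw [← hJ.2 x (J y), hJ.1, inner_neg_right, neg_neg]

lemma norm_J (x : E) : ‖J x‖ = ‖x‖ := by
  rw [norm_eq_sqrt_real_inner, hJ.2, ← norm_eq_sqrt_real_inner]

lemma inner_self_J (x : E) : ⟪x, J x⟫ = 0 := by
  have := hJ.inner_J_left x x
  rw [real_inner_comm] at this
  linarith

end IsOrthCplxStructure

/-- `u` is orthonormal for the hermitian inner product `⟪x, y⟫ + i ⟪x, J y⟫`. -/
def IsUnitaryFamily {E ι : Type*} [NormedAddCommGroup E] [InnerProductSpace ℝ E]
    (J : E →ₗ[ℝ] E) (u : ι → E) : Prop :=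
  Orthonormal ℝ u ∧ ∀ i j, ⟪u i, J (u j)⟫ = 0

lemma exists_norm_eq_one_forall_inner_eq_zero {E ι : Type*} [NormedAddCommGroup E]
    [InnerProductSpace ℝ E] [FiniteDimensional ℝ E] [Fintype ι] (g : ι → E)
    (h : Fintype.card ι < Module.finrank ℝ E) : ∃ z : E, ‖z‖ = 1 ∧ ∀ i, ⟪g i, z⟫ = 0 := by
  have hS : Submodule.span ℝ (Set.range g) ≠ ⊤ := fun hS => by
    have := finrank_range_le_card (R := ℝ) g
    rw [Set.finrank, hS, finrank_top] at this
    omega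
  obtain ⟨w, hw, hw0⟩ := (Submodule.ne_bot_iff _).mp (mt Submodule.orthogonal_eq_bot_iff.mp hS)
  refine ⟨‖w‖⁻¹ • w, norm_smul_inv_norm hw0, fun i => ?_⟩
  rw [inner_smul_right, Submodule.inner_right_of_mem_orthogonal
    (Submodule.subset_span (Set.mem_range_self i)) hw, mul_zero]

section UnitaryFamily

variable {E : Type*} [NormedAddCommGroup E] [InnerProductSpace ℝ E] {J : E →ₗ[ℝ] E}
  (hJ : IsOrthCplxStructure J)
include hJ

lemma IsUnitaryFamily.orthonormal_sumElim {ι : Type*} {u : ι → E} (hu : IsUnitaryFamily J u) :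
    Orthonormal ℝ (Sum.elim u (J ∘ u)) := by
  classical
  have h := orthonormal_iff_ite.mp hu.1
  refine orthonormal_iff_ite.mpr ?_
  rintro (i | i) (j | j)
  · simpa using h i j
  · simpa using hu.2 i j
  · simpa [hJ.inner_J_left] using hu.2 i j
  · simpa [hJ.2] using h i j

lemma IsUnitaryFamily.orthonormal_phaseMul {ι : Type*} {u : ι → E} (hu : IsUnitaryFamily J u)
    (k : ι → Fin 4) : Orthonormal ℝ (fun i => phaseMul J (k i) (u i)) := by
  classical
  refine orthonormal_iff_ite.mpr fun i j => ?_
  rcases eq_or_ne i j with rfl | hij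
  · generalize k i = m
    fin_cases m <;> simp [phaseMul, hJ.norm_J, hu.1.1 i]
  · have h₀ : ⟪u i, u j⟫ = 0 := by rw [orthonormal_iff_ite.mp hu.1, if_neg hij]
    have h₁ := hu.2 i j
    have h₂ : ⟪J (u i), u j⟫ = 0 := by rw [hJ.inner_J_left, h₁, neg_zero]
    have h₃ : ⟪J (u i), J (u j)⟫ = 0 := by rw [hJ.2, h₀]
    generalize k i = m; generalize k j = m'
    fin_cases m <;> fin_cases m' <;> simp [phaseMul, h₀, h₁, h₂, h₃, hij]

lemma IsUnitaryFamily.norm_phaseSum_sq {n : ℕ} {u : Fin n → E} (hu : IsUnitaryFamily J u)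
    (k : Fin n → Fin 4) : ‖phaseSum J u k‖ ^ 2 = n := by
  have := (hu.orthonormal_phaseMul hJ k).inner_sum 1 1 Finset.univ
  simp only [Pi.one_apply, one_smul, map_one, mul_one, Finset.sum_const, Finset.card_univ,
    Fintype.card_fin, nsmul_eq_mul] at this
  rw [← real_inner_self_eq_norm_sq, phaseSum, this]

lemma IsUnitaryFamily.snoc {n : ℕ} {u : Fin n → E} (hu : IsUnitaryFamily J u) {z : E}
    (hz : ‖z‖ = 1) (hzu : ∀ i, ⟪u i, z⟫ = 0) (hzJu : ∀ i, ⟪J (u i), z⟫ = 0) :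
    IsUnitaryFamily J (Fin.snoc u z : Fin (n + 1) → E) := by
  have h := orthonormal_iff_ite.mp hu.1
  have hzu' : ∀ i, ⟪z, u i⟫ = 0 := fun i => by rw [real_inner_comm, hzu]
  have hzJu' : ∀ i, ⟪z, J (u i)⟫ = 0 := fun i => by rw [real_inner_comm, hzJu]
  have huJz : ∀ i, ⟪u i, J z⟫ = 0 := fun i => by rw [← neg_eq_zero, ← hJ.inner_J_left, hzJu]
  refine ⟨orthonormal_iff_ite.mpr fun i j => ?_, fun i j => ?_⟩ <;>
    induction i using Fin.lastCases <;> induction j using Fin.lastCases <;>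
    simp [h, hu.2, hz, hzu, hzu', huJz, hzJu', hJ.inner_self_J, Fin.castSucc_ne_last,
      (Fin.castSucc_ne_last _).symm]

lemma exists_unitaryFamily_mem_range [FiniteDimensional ℝ E] {n : ℕ}
    (hE : Module.finrank ℝ E = 2 * n) {v : E} (hv : ‖v‖ = 1) :
    ∃ u : Fin n → E, IsUnitaryFamily J u ∧ v ∈ Set.range u := by
  have hn : 1 ≤ n := by
    have : Nontrivial E := ⟨v, 0, by rintro rfl; simp at hv⟩
    have := Module.finrank_pos (R := ℝ) (M := E)
    omega
  suffices ∀ k, 1 ≤ k → k ≤ n → ∃ u : Fin k → E, IsUnitaryFamily J u ∧ v ∈ Set.range u from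
    this n hn le_rfl
  intro k hk
  induction k, hk using Nat.le_induction with
  | base =>
    refine fun _ => ⟨fun _ => v, ⟨orthonormal_iff_ite.mpr fun i j => ?_, fun _ _ =>
      hJ.inner_self_J v⟩, ⟨0, rfl⟩⟩
    simp [Subsingleton.elim i j, hv]
  | succ k _ ih =>
    intro hkn
    obtain ⟨u, hu, i, rfl⟩ := ih (by omega)
    obtain ⟨z, hz, hperp⟩ := exists_norm_eq_one_forall_inner_eq_zero (Sum.elim u (J ∘ u))
      (by simp; omega)
    exact ⟨Fin.snoc u z, hu.snoc hJ hz (fun i => hperp (.inl i)) (fun i => hperp (.inr i)),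
      i.castSucc, by simp⟩

end UnitaryFamily

lemma LinearMap.sum_apply_orthonormalBasis_eq {E ι κ : Type*} [NormedAddCommGroup E]
    [InnerProductSpace ℝ E] [Fintype ι] [Fintype κ] (φ : E →ₗ[ℝ] E →ₗ[ℝ] ℝ)
    (b : OrthonormalBasis ι ℝ E) (c : OrthonormalBasis κ ℝ E) :
    ∑ i, φ (b i) (b i) = ∑ j, φ (c j) (c j) := by
  calc ∑ i, φ (b i) (b i) = ∑ i, ∑ j, ⟪c j, b i⟫ * φ (b i) (c j) := by
        refine Finset.sum_congr rfl fun i _ => ?_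
        nth_rw 2 [← c.sum_repr' (b i)]
        simp [map_sum]
    _ = ∑ j, φ (∑ i, ⟪b i, c j⟫ • b i) (c j) := by
        rw [Finset.sum_comm]
        simp [map_sum, LinearMap.sum_apply, real_inner_comm]
    _ = ∑ j, φ (c j) (c j) := by simp_rw [b.sum_repr']

namespace AlgCurvatureTensor

variable {E : Type*} [NormedAddCommGroup E] [InnerProductSpace ℝ E]
variable (T : AlgCurvatureTensor E)

def bilin (x z : E) : E →ₗ[ℝ] E →ₗ[ℝ] ℝ :=
  LinearMap.mk₂ ℝ (fun y w => T.R x y z w) (T.add_snd x · · z) (T.smul_snd · x · z)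
    (T.add_fth x · z) (T.smul_fth · x · z)

lemma sum_sum_R_orthonormalBasis_eq {ι κ : Type*} [Fintype ι] [Fintype κ]
    (b : OrthonormalBasis ι ℝ E) (c : OrthonormalBasis κ ℝ E) :
    ∑ i, ∑ a, T.R (b i) (b a) (b i) (b a) = ∑ p, ∑ q, T.R (c p) (c q) (c p) (c q) := by
  calc ∑ i, ∑ a, T.R (b i) (b a) (b i) (b a) = ∑ i, ∑ q, T.R (b i) (c q) (b i) (c q) :=
        Finset.sum_congr rfl fun i _ => (T.bilin (b i) (b i)).sum_apply_orthonormalBasis_eq b c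
    _ = ∑ q, ∑ i, T.R (c q) (b i) (c q) (b i) := by
        rw [Finset.sum_comm]
        simp_rw [T.R_swap_swap (c _)]
    _ = ∑ q, ∑ p, T.R (c q) (c p) (c q) (c p) :=
        Finset.sum_congr rfl fun q _ => (T.bilin (c q) (c q)).sum_apply_orthonormalBasis_eq b c

/-- The scalar curvature; by `sum_sum_R_orthonormalBasis_eq` any orthonormal basis computes it. -/
def scalarCurvature [FiniteDimensional ℝ E] : ℝ :=
  ∑ i, ∑ a, T.R (stdOrthonormalBasis ℝ E i) (stdOrthonormalBasis ℝ E a)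
    (stdOrthonormalBasis ℝ E i) (stdOrthonormalBasis ℝ E a)

lemma scalarCurvature_eq_sum_sum_R [FiniteDimensional ℝ E] {ι : Type*} [Fintype ι]
    (b : OrthonormalBasis ι ℝ E) :
    T.scalarCurvature = ∑ i, ∑ a, T.R (b i) (b a) (b i) (b a) :=
  T.sum_sum_R_orthonormalBasis_eq _ b

lemma scalarCurvature_neg [FiniteDimensional ℝ E] :
    (-T).scalarCurvature = -T.scalarCurvature := by
  simp [scalarCurvature]

variable {T} {J : E →ₗ[ℝ] E}

lemma IsKaehler.sum_sum_R_sumElim (hK : T.IsKaehler J) (hJ : ∀ x, J (J x) = -x) {ι : Type*}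
    [Fintype ι] (u : ι → E) :
    ∑ p, ∑ q, T.R (Sum.elim u (J ∘ u) p) (Sum.elim u (J ∘ u) q) (Sum.elim u (J ∘ u) p)
        (Sum.elim u (J ∘ u) q) = 2 * ∑ i, ∑ j, T.holBisec J (u i) (u j) := by
  simp only [Fintype.sum_sum_type, Sum.elim_inl, Sum.elim_inr, Function.comp_apply,
    hK.R_add_R_J hJ, holBisec_J_left hJ, ← Finset.sum_add_distrib, ← two_mul, Finset.mul_sum]

namespace IsKaehler

variable (hK : T.IsKaehler J) (hJ : IsOrthCplxStructure J)
include hK hJ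

lemma scalarCurvature_eq [FiniteDimensional ℝ E] {n : ℕ} (hE : Module.finrank ℝ E = 2 * n)
    {u : Fin n → E} (hu : IsUnitaryFamily J u) :
    T.scalarCurvature = 2 * ∑ i, ∑ j, T.holBisec J (u i) (u j) := by
  have hon := hu.orthonormal_sumElim hJ
  let c := OrthonormalBasis.mk hon
    (hon.linearIndependent.span_eq_top_of_card_eq_finrank' (by simp [hE]; ring)).ge
  rw [T.scalarCurvature_eq_sum_sum_R c, ← hK.sum_sum_R_sumElim hJ.1 u]
  simp [c]

lemma holSec_unitaryFamily_eq_of_forall_le {n : ℕ} {u : Fin n → E}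
    (hu : IsUnitaryFamily J u) {c : ℝ} (hc : ∀ v : E, ‖v‖ = 1 → T.holSec J v ≤ c)
    (hs : 2 * ∑ i, ∑ j, T.holBisec J (u i) (u j) = n * (n + 1) * c) (i : Fin n) :
    T.holSec J (u i) = c := by
  have hphase : ∀ k, T.holSec J (phaseSum J u k) ≤ c * n ^ 2 := fun k => by
    have := holSec_le_mul_norm_pow_four hc (phaseSum J u k)
    rwa [show ‖phaseSum J u k‖ ^ 4 = (‖phaseSum J u k‖ ^ 2) ^ 2 by ring,
      hu.norm_phaseSum_sq hJ] at this
  have hsum : 4 ^ n * (n * (n + 1) * c - ∑ j, T.holSec J (u j)) ≤ 4 ^ n * (c * n ^ 2) := by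
    rw [← hs, ← hK.sum_holSec_phaseSum hJ.1]
    simpa using Finset.sum_le_card_nsmul Finset.univ _ _ fun k _ => hphase k
  have hlower : n * c ≤ ∑ j, T.holSec J (u j) := by
    have := le_of_mul_le_mul_left hsum (by positivity)
    linarith
  have hupper : ∀ j, T.holSec J (u j) ≤ c := fun j => hc _ (hu.1.1 j)
  refine (hupper i).antisymm (not_lt.mp fun hlt => ?_)
  have := Finset.sum_lt_sum (fun j _ => hupper j) ⟨i, Finset.mem_univ _, hlt⟩
  simp only [Finset.sum_const, Finset.card_univ, Fintype.card_fin, nsmul_eq_mul] at this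
  linarith

variable [FiniteDimensional ℝ E] {n : ℕ} (hE : Module.finrank ℝ E = 2 * n)
include hE

theorem holSec_eq_of_forall_le
    (h : ∀ v : E, ‖v‖ = 1 → T.holSec J v ≤ T.scalarCurvature / (n * (n + 1)))
    {v : E} (hv : ‖v‖ = 1) : T.holSec J v = T.scalarCurvature / (n * (n + 1)) := by
  obtain ⟨u, hu, i, rfl⟩ := exists_unitaryFamily_mem_range hJ hE hv
  have hn : (n : ℝ) * (n + 1) ≠ 0 := by
    have : 0 < n := i.pos
    positivity
  refine hK.holSec_unitaryFamily_eq_of_forall_le hJ hu h ?_ i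
  rw [← hK.scalarCurvature_eq hJ hE hu, mul_div_cancel₀ _ hn]

theorem holSec_eq_of_forall_ge
    (h : ∀ v : E, ‖v‖ = 1 → T.scalarCurvature / (n * (n + 1)) ≤ T.holSec J v)
    {v : E} (hv : ‖v‖ = 1) : T.holSec J v = T.scalarCurvature / (n * (n + 1)) := by
  have := hK.neg.holSec_eq_of_forall_le hJ hE (fun w hw => by
    rw [holSec_neg, scalarCurvature_neg, neg_div, neg_le_neg_iff]
    exact h w hw) hv
  rwa [holSec_neg, scalarCurvature_neg, neg_div, neg_inj] at this

end IsKaehler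

end AlgCurvatureTensor

lemma scalarCurv_eq_scalarCurvature {n : ℕ} (T : AlgCurvatureTensor (EuclideanSpace ℝ (Fin n))) :
    scalarCurv T = T.scalarCurvature := by
  rw [T.scalarCurvature_eq_sum_sum_R (EuclideanSpace.basisFun (Fin n) ℝ)]
  simp [scalarCurv, stdBasis]

theorem holSectCurv_pinched_eq_of_kaehler_general (N : ℕ)
    (J : EuclideanSpace ℝ (Fin (2 * N)) →ₗ[ℝ] EuclideanSpace ℝ (Fin (2 * N)))
    (hJ : IsOrthCplxStructure J)
    (T : AlgCurvatureTensor (EuclideanSpace ℝ (Fin (2 * N))))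
    (hK : T.IsKaehler J)
    (hpinch :
      (∀ v : EuclideanSpace ℝ (Fin (2 * N)), ‖v‖ = 1 →
        T.R v (J v) v (J v) ≤ scalarCurv T / ((N : ℝ) * ((N : ℝ) + 1))) ∨
      (∀ v : EuclideanSpace ℝ (Fin (2 * N)), ‖v‖ = 1 →
        T.R v (J v) v (J v) ≥ scalarCurv T / ((N : ℝ) * ((N : ℝ) + 1)))) :
    ∀ v : EuclideanSpace ℝ (Fin (2 * N)), ‖v‖ = 1 →
      T.R v (J v) v (J v) = scalarCurv T / ((N : ℝ) * ((N : ℝ) + 1)) := by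
  have hE : Module.finrank ℝ (EuclideanSpace ℝ (Fin (2 * N))) = 2 * N :=
    finrank_euclideanSpace_fin
  rw [scalarCurv_eq_scalarCurvature] at hpinch ⊢
  intro v hv
  rcases hpinch with h | h
  · exact hK.holSec_eq_of_forall_le hJ hE h hv
  · exact hK.holSec_eq_of_forall_ge hJ hE h hv

/-- For a Kähler algebraic curvature tensor on `ℝ^{2N}`, if
`H(v) ≤ s/(N(N+1))` for every unit vector `v` (or `≥` for every unit vector),
then `H(v) = s/(N(N+1))` for every unit vector `v`. -/
theorem holSectCurv_pinched_eq_of_kaehler (N : ℕ) (hN : 1 ≤ N)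
    (J : EuclideanSpace ℝ (Fin (2 * N)) →ₗ[ℝ] EuclideanSpace ℝ (Fin (2 * N)))
    (hJ : IsOrthCplxStructure J)
    (T : AlgCurvatureTensor (EuclideanSpace ℝ (Fin (2 * N))))
    (hK : T.IsKaehler J)
    (hpinch :
      (∀ v : EuclideanSpace ℝ (Fin (2 * N)), ‖v‖ = 1 →
        T.R v (J v) v (J v) ≤ scalarCurv T / ((N : ℝ) * ((N : ℝ) + 1))) ∨
      (∀ v : EuclideanSpace ℝ (Fin (2 * N)), ‖v‖ = 1 →
        T.R v (J v) v (J v) ≥ scalarCurv T / ((N : ℝ) * ((N : ℝ) + 1)))) :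
    ∀ v : EuclideanSpace ℝ (Fin (2 * N)), ‖v‖ = 1 →
      T.R v (J v) v (J v) = scalarCurv T / ((N : ℝ) * ((N : ℝ) + 1)) :=
  holSectCurv_pinched_eq_of_kaehler_general N J hJ T hK hpinch
end
end
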